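/- Let n be an integer, j ≥ 1 an integer, and 0 < R₀ < R real numbers. The function g(r) = r^(−(n−3)/2)·sin( jπ·log(r/R₀)/log(R/R₀) ) satisfies g(R₀) = 0, g(R) = 0, and the differential equation −r²·g''(r) − (n−2)·r·g'(r) = β_j·g(r) for every r ∈ (R₀, R), where β_j = ((n−3)/2)² + ( jπ/log(R/R₀) )². -/

import Mathlib

/-!
In the variable `t = log (r / R₀)` the Euler operator `r² d²/dr² + (n - 2) r d/dr` has constant
coefficients, and `g = e^{at} sin (c t)` with `a = -(n - 3)/2`, `c = jπ / log (R / R₀)`. Concretely,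
the functions `r ^ b (p sin (c t) + q cos (c t))` are differentiated into functions of the same
shape with `b` lowered by one, so `g'` and `g''` are explicit; the choice of `a` kills the
`cos` terms and leaves the eigenvalue `a² + c²`. The boundary values are `sin 0` and `sin (jπ)`.
-/

open Real

/-- The radial eigenfunction `g(r) = r^(-(n-3)/2) sin(jπ log(r/R₀)/log(R/R₀))`. -/
noncomputable def radialEigen (n : ℤ) (j : ℕ) (R₀ R : ℝ) : ℝ → ℝ :=
  fun r => r ^ (-(((n : ℝ) - 3) / 2)) *
    Real.sin ((j : ℝ) * Real.pi * Real.log (r / R₀) / Real.log (R / R₀))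

noncomputable def rpowMulTrigLog (b c R₀ p q : ℝ) (r : ℝ) : ℝ :=
  r ^ b * (p * sin (c * log (r / R₀)) + q * cos (c * log (r / R₀)))

section rpowMulTrigLog

variable {b c R₀ r : ℝ}

theorem hasDerivAt_rpowMulTrigLog (hR₀ : R₀ ≠ 0) (hr : 0 < r) (p q : ℝ) :
    HasDerivAt (rpowMulTrigLog b c R₀ p q)
      (rpowMulTrigLog (b - 1) c R₀ (b * p - c * q) (b * q + c * p) r) r := by
  have hlog : HasDerivAt (fun x => c * log (x / R₀)) (c * r⁻¹) r := by
    have h := ((hasDerivAt_id r).div_const R₀).log (div_ne_zero hr.ne' hR₀)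
    refine (h.const_mul c).congr_deriv ?_
    simp only [id]
    field_simp
  have hrb : r ^ b = r ^ (b - 1) * r := by
    rw [← rpow_add_one hr.ne', sub_add_cancel]
  refine ((hasDerivAt_rpow_const (p := b) (Or.inl hr.ne')).mul
    (((hlog.sin).const_mul p).add ((hlog.cos).const_mul q))).congr_deriv ?_
  simp only [rpowMulTrigLog, Pi.add_apply, hrb]
  field_simp
  ring

theorem deriv_rpowMulTrigLog (hR₀ : R₀ ≠ 0) (hr : 0 < r) (p q : ℝ) :
    deriv (rpowMulTrigLog b c R₀ p q) r =
      rpowMulTrigLog (b - 1) c R₀ (b * p - c * q) (b * q + c * p) r :=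
  (hasDerivAt_rpowMulTrigLog hR₀ hr p q).deriv

theorem deriv_deriv_rpowMulTrigLog (hR₀ : R₀ ≠ 0) (hr : 0 < r) (p q : ℝ) :
    deriv (deriv (rpowMulTrigLog b c R₀ p q)) r =
      rpowMulTrigLog (b - 1 - 1) c R₀
        ((b - 1) * (b * p - c * q) - c * (b * q + c * p))
        ((b - 1) * (b * q + c * p) + c * (b * p - c * q)) r := by
  have hderiv : deriv (rpowMulTrigLog b c R₀ p q) =ᶠ[nhds r]
      rpowMulTrigLog (b - 1) c R₀ (b * p - c * q) (b * q + c * p) :=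
    Filter.eventually_of_mem (Ioi_mem_nhds hr) fun x hx => deriv_rpowMulTrigLog hR₀ hx p q
  rw [hderiv.deriv_eq, deriv_rpowMulTrigLog hR₀ hr]

theorem mul_rpowMulTrigLog_sub_one (hr : 0 < r) (p q : ℝ) :
    r * rpowMulTrigLog (b - 1) c R₀ p q r = rpowMulTrigLog b c R₀ p q r := by
  have hrb : r * r ^ (b - 1) = r ^ b := by
    rw [mul_comm, ← rpow_add_one hr.ne', sub_add_cancel]
  simp only [rpowMulTrigLog, ← mul_assoc, hrb]

end rpowMulTrigLog

theorem radialEigen_eq_rpowMulTrigLog (n : ℤ) (j : ℕ) (R₀ R : ℝ) :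
    radialEigen n j R₀ R =
      rpowMulTrigLog (-(((n : ℝ) - 3) / 2)) (j * π / log (R / R₀)) R₀ 1 0 := by
  ext r
  simp only [radialEigen, rpowMulTrigLog, one_mul, zero_mul, add_zero, mul_div_right_comm]

theorem radialEigen_left (n : ℤ) (j : ℕ) {R₀ : ℝ} (hR₀ : R₀ ≠ 0) (R : ℝ) :
    radialEigen n j R₀ R R₀ = 0 := by
  simp [radialEigen, div_self hR₀]

theorem radialEigen_right (n : ℤ) (j : ℕ) (R₀ R : ℝ) : radialEigen n j R₀ R R = 0 := by
  rcases eq_or_ne (log (R / R₀)) 0 with hL | hL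
  · simp [radialEigen, hL]
  · simp [radialEigen, mul_div_assoc, div_self hL, sin_nat_mul_pi]

theorem radialEigen_ode_general (n : ℤ) (j : ℕ) (R₀ R : ℝ)
    (hR₀ : 0 < R₀) :
    radialEigen n j R₀ R R₀ = 0 ∧ radialEigen n j R₀ R R = 0 ∧
    ∀ r ∈ Set.Ioo R₀ R,
      -(r ^ 2) * deriv (deriv (radialEigen n j R₀ R)) r -
          ((n : ℝ) - 2) * r * deriv (radialEigen n j R₀ R) r
        = ((((n : ℝ) - 3) / 2) ^ 2 + ((j : ℝ) * Real.pi / Real.log (R / R₀)) ^ 2) *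
            radialEigen n j R₀ R r := by
  refine ⟨radialEigen_left n j hR₀.ne' R, radialEigen_right n j R₀ R, fun r hr => ?_⟩
  have hr0 : 0 < r := hR₀.trans hr.1
  rw [radialEigen_eq_rpowMulTrigLog, deriv_deriv_rpowMulTrigLog hR₀.ne' hr0,
    deriv_rpowMulTrigLog hR₀.ne' hr0, sq, neg_mul, mul_assoc r, mul_rpowMulTrigLog_sub_one hr0,
    mul_rpowMulTrigLog_sub_one hr0, mul_assoc _ r, mul_rpowMulTrigLog_sub_one hr0]
  simp only [rpowMulTrigLog]
  ring

/-- `g` vanishes at `R₀` and `R`, and satisfies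
`-r² g''(r) - (n-2) r g'(r) = β_j g(r)` on `(R₀, R)`, where
`β_j = ((n-3)/2)² + (jπ/log(R/R₀))²`. -/
theorem radialEigen_ode (n : ℤ) (j : ℕ) (hj : 1 ≤ j) (R₀ R : ℝ)
    (hR₀ : 0 < R₀) (hR : R₀ < R) :
    radialEigen n j R₀ R R₀ = 0 ∧ radialEigen n j R₀ R R = 0 ∧
    ∀ r ∈ Set.Ioo R₀ R,
      -(r ^ 2) * deriv (deriv (radialEigen n j R₀ R)) r -
          ((n : ℝ) - 2) * r * deriv (radialEigen n j R₀ R) r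
        = ((((n : ℝ) - 3) / 2) ^ 2 + ((j : ℝ) * Real.pi / Real.log (R / R₀)) ^ 2) *
            radialEigen n j R₀ R r :=
  radialEigen_ode_general n j R₀ R hR₀
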